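/- arXiv:0810.1372 — 2 statements merged into one kernel-verified Lean document; each statement's English description precedes it below -/
import Mathlib

section
/- Let K be an algebraically closed field of characteristic 0 and n ≥ 2. Let ℓ be a nonzero linear form in K[x0,…,xn] and H ⊂ P^n its zero locus. Let Y be the fat point scheme m_1P_1 + … + m_kP_k of P^n supported at distinct points P_1,…,P_k, and let Res_H(Y) be the fat point scheme obtained from Y by replacing the multiplicity m_i by m_i − 1 at every point P_i lying on H (and keeping m_i at points off H). Fix integers d > 0, z > 0, γ ≥ 0, and denote by V_e(Z) the space of degree-e homogeneous polynomials satisfying the order-vanishing conditions of a fat point scheme Z. If dim V_d(Y) ≤ γ + z and dim V_{d−1}(Res_H(Y)) ≤ γ, then there exist z distinct points Q_1, …, Q_z on H, distinct from P_1,…,P_k, such that the space of degree-d homogeneous polynomials satisfying the conditions of Y and additionally vanishing at each Q_j has dimension at most γ. -/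
/-- Iterated partial derivative along a list of coordinate directions. -/
noncomputable def derivAlong (K : Type*) [CommRing K] (n : ℕ) (l : List (Fin n)) :
    Module.End K (MvPolynomial (Fin n) K) :=
  (l.map fun i => (MvPolynomial.pderiv (R := K) i).toLinearMap).prod

/-- The submodule of polynomials all of whose partial derivatives of total order `< m`
vanish at the point `P`, i.e. polynomials vanishing to order `m` at `P`. -/
noncomputable def vanishingSubmodule (K : Type*) [CommRing K] (n m : ℕ) (P : Fin n → K) :
    Submodule K (MvPolynomial (Fin n) K) :=
  ⨅ l ∈ {l : List (Fin n) | l.length < m},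
    LinearMap.ker ((MvPolynomial.aeval P).toLinearMap.comp (derivAlong K n l))

/-- The space of homogeneous polynomials of degree `d` vanishing to order `m i`
at the point `P i`, for all `i`. -/
noncomputable def fatPointSpace (K : Type*) [CommRing K] (n : ℕ) {k : ℕ} (d : ℕ)
    (P : Fin k → (Fin n → K)) (m : Fin k → ℕ) : Submodule K (MvPolynomial (Fin n) K) :=
  MvPolynomial.homogeneousSubmodule (Fin n) K d ⊓ ⨅ i, vanishingSubmodule K n (m i) (P i)

/-- The vectors `P i` represent distinct points of projective space: each is nonzero
and no two are proportional. -/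
def ProjDistinct {K : Type*} [CommRing K] {n k : ℕ} (P : Fin k → (Fin n → K)) : Prop :=
  (∀ i, P i ≠ 0) ∧ ∀ i j, i ≠ j → ∀ c : K, P i ≠ c • P j


/-!
The points are chosen one at a time on `H`, each off the lines through the `P i` and through
the points already chosen. If some element of the current space `V` is nonzero at such an
admissible point, imposing that point lowers `dim V` by one. Otherwise every element of `V`
vanishes on `H` outside finitely many lines, hence is divisible by `ℓ` (here `n ≥ 2` and `K` is
infinite). If `ℓ G` vanishes to order `m` at `P`, then `G` vanishes to order `m` at `P` when
`P ∉ H`, and to order `m - 1` when `P ∈ H` (this uses characteristic `0`); so `V` lies in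
`ℓ · V_{d-1}(Res_H Y)`, and then `dim V ≤ γ` already.
-/

open MvPolynomial Module

namespace MvPolynomial

section LinearForm

variable {R σ : Type*} [CommSemiring R] [Fintype σ]

noncomputable def linearForm (a : σ → R) : MvPolynomial σ R := ∑ i, a i • X i

@[simp]
theorem eval_linearForm (a y : σ → R) : eval y (linearForm a) = a ⬝ᵥ y := by
  simp [linearForm, dotProduct]

theorem isHomogeneous_linearForm (a : σ → R) : (linearForm a).IsHomogeneous 1 :=
  IsHomogeneous.sum _ _ _ fun i _ => by
    simpa [smul_eq_C_mul] using isHomogeneous_C_mul_X (a i) i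

theorem pderiv_linearForm (a : σ → R) (i : σ) : pderiv i (linearForm a) = C (a i) := by
  classical
  simp [linearForm, pderiv_X, Pi.single_apply, smul_eq_C_mul]

theorem coeff_linearForm (a : σ → R) (i : σ) :
    coeff (Finsupp.single i 1) (linearForm a) = a i := by
  classical
  simp [linearForm, coeff_sum, coeff_X, Finsupp.single_left_inj one_ne_zero]

theorem linearForm_ne_zero {a : σ → R} (ha : a ≠ 0) : linearForm a ≠ 0 := by
  obtain ⟨i, hi⟩ := Function.ne_iff.1 ha
  exact fun h => hi (by simpa [h] using (coeff_linearForm a i).symm)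

theorem IsHomogeneous.exists_eq_linearForm {ℓ : MvPolynomial σ R} (h : ℓ.IsHomogeneous 1) :
    ∃ a : σ → R, ℓ = linearForm a := by
  rw [← mem_homogeneousSubmodule, homogeneousSubmodule_one_eq_span_X,
    Submodule.mem_span_range_iff_exists_fun] at h
  obtain ⟨a, rfl⟩ := h
  exact ⟨a, rfl⟩

end LinearForm

theorem pderiv_pderiv_comm {R σ : Type*} [CommSemiring R] (i j : σ) (f : MvPolynomial σ R) :
    pderiv i (pderiv j f) = pderiv j (pderiv i f) := by
  induction f using MvPolynomial.induction_on' with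
  | monomial s a =>
    simp only [pderiv_monomial]
    rcases eq_or_ne i j with rfl | hij
    · rfl
    · rw [Finsupp.tsub_apply, Finsupp.tsub_apply,
        Finsupp.single_eq_of_ne' hij, Finsupp.single_eq_of_ne' (Ne.symm hij),
        tsub_zero, tsub_zero, tsub_tsub, tsub_tsub, add_comm (Finsupp.single j 1),
        mul_right_comm]
  | add p q hp hq => simp [hp, hq]

theorem sub_aeval_mem_of_forall_X_sub_mem {R σ : Type*} [CommRing R]
    {I : Ideal (MvPolynomial σ R)} {g : σ → MvPolynomial σ R} (hg : ∀ j, X j - g j ∈ I)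
    (F : MvPolynomial σ R) : F - aeval g F ∈ I := by
  rw [← Ideal.Quotient.eq]
  have : (Ideal.Quotient.mkₐ R I).comp (aeval g) = Ideal.Quotient.mkₐ R I := by
    ext j
    simpa using (Ideal.Quotient.eq.2 (hg j)).symm
  exact (AlgHom.congr_fun this F).symm

section Graded

attribute [local instance] MvPolynomial.gradedAlgebra

variable {R σ : Type*} [CommRing R]

theorem coe_decompose_homogeneousSubmodule (ψ : MvPolynomial σ R) (j : ℕ) :
    (DirectSum.decompose (homogeneousSubmodule σ R) ψ j : MvPolynomial σ R) =
      homogeneousComponent j ψ :=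
  decomposition.decompose'_apply ψ j

theorem IsHomogeneous.of_mul_left [IsDomain R] {φ ψ : MvPolynomial σ R} {i j : ℕ}
    (hφ : φ.IsHomogeneous i) (hφ0 : φ ≠ 0) (h : (φ * ψ).IsHomogeneous (i + j)) :
    ψ.IsHomogeneous j := by
  have key := DirectSum.coe_decompose_mul_of_left_mem_of_le (homogeneousSubmodule σ R)
    (b := ψ) hφ (Nat.le_add_right i j)
  rw [coe_decompose_homogeneousSubmodule, coe_decompose_homogeneousSubmodule,
    add_tsub_cancel_left, homogeneousComponent_eq_self h] at key
  rw [mul_left_cancel₀ hφ0 key]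
  exact homogeneousComponent_isHomogeneous j ψ

end Graded

end MvPolynomial

namespace FatPoint

section DerivAlong

variable {R : Type*} [CommRing R] {N : ℕ}

theorem derivAlong_cons (i : Fin N) (l : List (Fin N)) (f : MvPolynomial (Fin N) R) :
    derivAlong R N (i :: l) f = pderiv i (derivAlong R N l f) := by
  simp [derivAlong]

theorem derivAlong_perm {l l' : List (Fin N)} (h : l.Perm l') :
    derivAlong R N l = derivAlong R N l' := by
  refine List.Perm.prod_eq' (h.map _) (List.pairwise_map.2 ?_)
  exact List.pairwise_of_forall fun i j => LinearMap.ext fun f => pderiv_pderiv_comm i j f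

theorem mem_vanishingSubmodule {m : ℕ} {P : Fin N → R} {f : MvPolynomial (Fin N) R} :
    f ∈ vanishingSubmodule R N m P ↔
      ∀ l : List (Fin N), l.length < m → eval P (derivAlong R N l f) = 0 := by
  simp [vanishingSubmodule, Submodule.mem_iInf]

theorem mem_vanishingSubmodule_one {P : Fin N → R} {f : MvPolynomial (Fin N) R} :
    f ∈ vanishingSubmodule R N 1 P ↔ eval P f = 0 := by
  simp [mem_vanishingSubmodule, derivAlong]

theorem derivAlong_linearForm_mul (a : Fin N → R) (G : MvPolynomial (Fin N) R)
    (l : List (Fin N)) :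
    derivAlong R N l (linearForm a * G) =
      linearForm a * derivAlong R N l G +
        ∑ j : Fin l.length, C (a l[j]) * derivAlong R N (l.eraseIdx j) G := by
  induction l with
  | nil => simp [derivAlong]
  | cons i l ih =>
    rw [derivAlong_cons, ih, map_add, pderiv_mul, pderiv_linearForm, map_sum]
    simp only [List.length_cons, Fin.sum_univ_succ, pderiv_C_mul, ← derivAlong_cons,
      Fin.getElem_fin, Fin.val_zero, List.getElem_cons_zero, List.eraseIdx_cons_zero,
      Fin.val_succ, List.getElem_cons_succ, List.eraseIdx_cons_succ]
    ring

theorem inf_iInf_vanishingSubmodule_cons {t : ℕ} (V : Submodule R (MvPolynomial (Fin N) R))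
    (Q₀ : Fin N → R) (Q : Fin t → Fin N → R) :
    V ⊓ ⨅ j, vanishingSubmodule R N 1 ((Fin.cons Q₀ Q : Fin (t + 1) → Fin N → R) j) =
      V ⊓ vanishingSubmodule R N 1 Q₀ ⊓ ⨅ j, vanishingSubmodule R N 1 (Q j) := by
  ext F
  simp [Submodule.mem_iInf, Fin.forall_fin_succ, and_assoc]

end DerivAlong

section Residual

variable {R : Type*} [CommRing R] [IsDomain R] {N : ℕ}

theorem mem_vanishingSubmodule_of_linearForm_mul_mem {a P : Fin N → R} {m : ℕ}
    {G : MvPolynomial (Fin N) R} (hP : eval P (linearForm a) ≠ 0)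
    (h : linearForm a * G ∈ vanishingSubmodule R N m P) : G ∈ vanishingSubmodule R N m P := by
  rw [mem_vanishingSubmodule] at h ⊢
  intro l hl
  induction hlen : l.length using Nat.strong_induction_on generalizing l with
  | _ t ih =>
    have hsum : ∑ j : Fin l.length,
        eval P (C (a l[j]) * derivAlong R N (l.eraseIdx j) G) = 0 :=
      Finset.sum_eq_zero fun j _ => by
        have := List.length_eraseIdx_add_one j.2
        rw [map_mul, ih _ (by omega) _ (by omega) rfl, mul_zero]
    have key := congrArg (eval P) (derivAlong_linearForm_mul a G l)
    rw [h l hl, map_add, map_mul, map_sum, hsum, add_zero] at key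
    exact (mul_eq_zero.1 key.symm).resolve_left hP

theorem mem_vanishingSubmodule_pred_of_linearForm_mul_mem [CharZero R] {a P : Fin N → R}
    (ha : a ≠ 0) {m : ℕ} {G : MvPolynomial (Fin N) R}
    (hP : eval P (linearForm a) = 0) (h : linearForm a * G ∈ vanishingSubmodule R N m P) :
    G ∈ vanishingSubmodule R N (m - 1) P := by
  obtain ⟨i₀, ha⟩ : ∃ i, a i ≠ 0 := Function.ne_iff.1 ha
  rw [mem_vanishingSubmodule] at h ⊢
  intro l hl
  induction hν : l.length - l.count i₀ using Nat.strong_induction_on generalizing l with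
  | _ t ih =>
    -- Differentiate `ℓ G` once more along `i₀`: the terms deleting an entry `≠ i₀` vanish by
    -- induction, and the `c + 1` remaining ones all equal `a i₀ * E`.
    set E := eval P (derivAlong R N l G)
    have hterm : ∀ j : Fin l.length,
        eval P (C (a l[(j : ℕ)]) * derivAlong R N (i₀ :: l.eraseIdx j) G) =
          if l[(j : ℕ)] = i₀ then a i₀ * E else 0 := by
      intro j
      have hperm := List.getElem_cons_eraseIdx_perm j.2
      have hlen := List.length_eraseIdx_add_one j.2
      split_ifs with hj
      · rw [map_mul, eval_C, hj, derivAlong_perm (hj ▸ hperm)]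
      · have hcount : (l.eraseIdx j).count i₀ = l.count i₀ := by
          simpa [List.count_cons, hj] using hperm.count_eq i₀
        have := List.count_le_length (a := i₀) (l := l.eraseIdx j)
        rw [map_mul, ih _ (by simp [hcount]; omega) _ (by simp; omega) rfl, mul_zero]
    have key := congrArg (eval P) (derivAlong_linearForm_mul a G (i₀ :: l))
    rw [h _ (by simp; omega), map_add, map_mul, hP, zero_mul, zero_add, map_sum] at key
    simp only [List.length_cons, Fin.sum_univ_succ, Fin.getElem_fin, Fin.val_zero,
      List.getElem_cons_zero, List.eraseIdx_cons_zero, Fin.val_succ, List.getElem_cons_succ,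
      List.eraseIdx_cons_succ] at key
    rw [Finset.sum_congr rfl fun j _ => hterm j] at key
    rw [Finset.sum_ite, Finset.sum_const, Finset.sum_const_zero, add_zero, nsmul_eq_mul,
      map_mul, eval_C] at key
    set c := (Finset.univ.filter fun j : Fin l.length => l[(j : ℕ)] = i₀).card
    have hc : ((c + 1 : ℕ) : R) * a i₀ * E = 0 := by
      push_cast
      linear_combination -key
    simpa [ha, Nat.cast_add_one_ne_zero] using hc

end Residual

def AvoidsLines (K : Type*) {M : Type*} [SMul K M] (S : Finset M) (Q : M) : Prop :=
  ∀ v ∈ S, ∀ c : K, Q ≠ c • v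

theorem ne_smul_of_forall_ne_smul {K M : Type*} [Field K] [AddCommGroup M] [Module K M] {x y : M}
    (hx : x ≠ 0) (h : ∀ c : K, y ≠ c • x) (c : K) : x ≠ c • y := by
  rintro rfl
  rcases eq_or_ne c 0 with rfl | hc
  · exact hx (zero_smul K y)
  · exact h c⁻¹ (by rw [smul_smul, inv_mul_cancel₀ hc, one_smul])

section Hyperplane

variable {K : Type*} [Field K] {N : ℕ}

theorem exists_ne_zero_apply_eq_zero_dotProduct_eq_zero (hN : 3 ≤ N) (v : Fin N → K)
    (i₀ : Fin N) : ∃ w : Fin N → K, w ≠ 0 ∧ w i₀ = 0 ∧ w ⬝ᵥ v = 0 := by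
  let f : (Fin N → K) →ₗ[K] K × K := (LinearMap.proj i₀).prod (dotProductBilin K K v)
  have hf : LinearMap.ker f ≠ ⊥ := LinearMap.ker_ne_bot_of_finrank_lt (by simp; omega)
  obtain ⟨w, hw, hw0⟩ := (Submodule.ne_bot_iff _).1 hf
  simp only [LinearMap.mem_ker, f, Prod.ext_iff] at hw
  exact ⟨w, hw0, by simpa using hw.1, by simpa [dotProduct_comm] using hw.2⟩

/-- The substitution `X i₀ ↦ X i₀ - ℓ / a i₀`; composing with it projects onto `ℓ = 0` along
the `i₀`-th axis. -/
noncomputable def hyperplaneProj (a : Fin N → K) (i₀ : Fin N) : Fin N → MvPolynomial (Fin N) K :=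
  X - Pi.single i₀ ((a i₀)⁻¹ • linearForm a)

theorem eval_aeval_hyperplaneProj (a : Fin N → K) (i₀ : Fin N) (y : Fin N → K)
    (F : MvPolynomial (Fin N) K) :
    eval y (aeval (hyperplaneProj a i₀) F) =
      eval (y - Pi.single i₀ ((a i₀)⁻¹ * eval y (linearForm a))) F := by
  change aeval y (aeval _ F) = aeval _ F
  rw [comp_aeval_apply]
  congr 1
  ext j
  rcases eq_or_ne j i₀ with rfl | hj <;> simp [hyperplaneProj, *]

theorem linearForm_dvd_of_forall_eval_eq_zero [Infinite K] (hN : 3 ≤ N) {a : Fin N → K}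
    (ha : a ≠ 0) (S : Finset (Fin N → K)) {F : MvPolynomial (Fin N) K}
    (hF : ∀ Q, eval Q (linearForm a) = 0 → AvoidsLines K S Q → eval Q F = 0) :
    linearForm a ∣ F := by
  obtain ⟨i₀, ha⟩ : ∃ i, a i ≠ 0 := Function.ne_iff.1 ha
  -- `w v` vanishes on `v` and on the `i₀`-th axis, so it kills every `y` projecting into `K v`.
  choose w hw₀ hwi₀ hwv using
    fun v : Fin N → K => exists_ne_zero_apply_eq_zero_dotProduct_eq_zero hN v i₀
  have hB : ∏ v ∈ S, linearForm (w v) ≠ 0 :=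
    Finset.prod_ne_zero_iff.2 fun v _ => linearForm_ne_zero (hw₀ v)
  have hFB : aeval (hyperplaneProj a i₀) F * ∏ v ∈ S, linearForm (w v) = 0 := by
    refine MvPolynomial.funext fun y => ?_
    set Q := y - Pi.single i₀ ((a i₀)⁻¹ * eval y (linearForm a))
    have hQ : eval Q (linearForm a) = 0 := by
      simp [Q, dotProduct_sub, mul_inv_cancel_left₀ ha]
    rw [map_mul, eval_aeval_hyperplaneProj, map_zero]
    by_cases hQS : AvoidsLines K S Q
    · rw [hF Q hQ hQS, zero_mul]
    · obtain ⟨v, hv, c, hc⟩ : ∃ v ∈ S, ∃ c : K, Q = c • v := by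
        simpa [AvoidsLines] using hQS
      have : eval y (linearForm (w v)) = 0 := by
        have hy : y = c • v + Pi.single i₀ ((a i₀)⁻¹ * eval y (linearForm a)) := by
          simp [← hc, Q]
        rw [eval_linearForm, hy, dotProduct_add, dotProduct_smul, hwv, dotProduct_single, hwi₀]
        simp
      rw [map_prod, Finset.prod_eq_zero hv this, mul_zero]
  have hmem := sub_aeval_mem_of_forall_X_sub_mem (I := Ideal.span {linearForm a})
    (g := hyperplaneProj a i₀) (fun j => ?_) F
  · rwa [(mul_eq_zero.1 hFB).resolve_right hB, sub_zero, Ideal.mem_span_singleton] at hmem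
  · rcases eq_or_ne j i₀ with rfl | hj
    · simpa [hyperplaneProj, smul_eq_C_mul] using
        Ideal.mul_mem_left _ _ (Ideal.mem_span_singleton_self _)
    · simp [hyperplaneProj, hj]

end Hyperplane

section Points

variable {K : Type*} [Field K] [Infinite K] {N : ℕ} {a : Fin N → K}

theorem exists_eval_linearForm_eq_zero_avoidsLines (hN : 3 ≤ N) (ha : a ≠ 0)
    (S : Finset (Fin N → K)) : ∃ Q, eval Q (linearForm a) = 0 ∧ AvoidsLines K S Q := by
  by_contra! h
  -- otherwise `ℓ ∣ 1`
  obtain ⟨G, hG⟩ := linearForm_dvd_of_forall_eval_eq_zero hN ha S (F := 1)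
    fun Q hQ hQS => absurd hQS (h Q hQ)
  have h0 := congrArg (eval 0) hG
  rw [map_mul, eval_linearForm, dotProduct_zero, zero_mul, map_one] at h0
  exact one_ne_zero h0

theorem exists_point_finrank_inf_lt_or_forall_linearForm_dvd (hN : 3 ≤ N) (ha : a ≠ 0)
    (S : Finset (Fin N → K)) (V : Submodule K (MvPolynomial (Fin N) K)) [FiniteDimensional K V] :
    ∃ Q, eval Q (linearForm a) = 0 ∧ AvoidsLines K S Q ∧
      (finrank K ↥(V ⊓ vanishingSubmodule K N 1 Q) < finrank K V ∨
        ∀ F ∈ V, linearForm a ∣ F) := by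
  by_cases h : ∃ Q, eval Q (linearForm a) = 0 ∧ AvoidsLines K S Q ∧ ∃ F ∈ V, eval Q F ≠ 0
  · obtain ⟨Q, hQ, hQS, F, hFV, hFQ⟩ := h
    refine ⟨Q, hQ, hQS, Or.inl (Submodule.finrank_lt_finrank_of_lt ?_)⟩
    exact SetLike.lt_iff_le_and_exists.2
      ⟨inf_le_left, F, hFV, fun hF => hFQ (mem_vanishingSubmodule_one.1 (Submodule.mem_inf.1 hF).2)⟩
  · push Not at h
    obtain ⟨Q, hQ, hQS⟩ := exists_eval_linearForm_eq_zero_avoidsLines hN ha S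
    exact ⟨Q, hQ, hQS, Or.inr fun F hF =>
      linearForm_dvd_of_forall_eval_eq_zero hN ha S fun Q' hQ' hQ'S => h Q' hQ' hQ'S F hF⟩

theorem exists_points_finrank_inf_le (hN : 3 ≤ N) (ha : a ≠ 0) {γ : ℕ} (t : ℕ)
    (V : Submodule K (MvPolynomial (Fin N) K)) [FiniteDimensional K V]
    (hV : ∀ W ≤ V, (∀ F ∈ W, linearForm a ∣ F) → finrank K W ≤ γ)
    (hVt : finrank K V ≤ γ + t) (S : Finset (Fin N → K)) (hS : 0 ∈ S) :
    ∃ Q : Fin t → Fin N → K, (∀ j, eval (Q j) (linearForm a) = 0) ∧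
      (∀ j, AvoidsLines K S (Q j)) ∧ (∀ j j', j ≠ j' → ∀ c : K, Q j ≠ c • Q j') ∧
      finrank K ↥(V ⊓ ⨅ j, vanishingSubmodule K N 1 (Q j)) ≤ γ := by
  classical
  induction t generalizing V S with
  | zero =>
    refine ⟨Fin.elim0, fun j => j.elim0, fun j => j.elim0, fun j => j.elim0, ?_⟩
    rwa [iInf_of_empty, inf_top_eq]
  | succ t ih =>
    obtain ⟨Q₀, hQ₀, hQ₀S, hdrop⟩ :=
      exists_point_finrank_inf_lt_or_forall_linearForm_dvd hN ha S V
    have hV₀ : finrank K ↥(V ⊓ vanishingSubmodule K N 1 Q₀) ≤ γ + t := by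
      rcases hdrop with hlt | hdvd
      · omega
      · have := Submodule.finrank_mono (inf_le_left : V ⊓ vanishingSubmodule K N 1 Q₀ ≤ V)
        have := hV V le_rfl hdvd
        omega
    obtain ⟨Q, hQ, hQS, hQQ, hrank⟩ := ih (V ⊓ vanishingSubmodule K N 1 Q₀)
      (fun W hW => hV W (hW.trans inf_le_left)) hV₀ (insert Q₀ S) (Finset.mem_insert_of_mem hS)
    have hQ₀0 : Q₀ ≠ 0 := by simpa using hQ₀S 0 hS 1
    have hQQ₀ : ∀ j c, Q j ≠ c • Q₀ := fun j => hQS j Q₀ (Finset.mem_insert_self _ _)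
    refine ⟨Fin.cons Q₀ Q, ?_, ?_, ?_, ?_⟩
    · exact Fin.forall_fin_succ.2 ⟨hQ₀, hQ⟩
    · refine Fin.forall_fin_succ.2 ⟨hQ₀S, fun j v hv => hQS j v (Finset.mem_insert_of_mem hv)⟩
    · intro j j' hjj' c
      induction j using Fin.cases <;> induction j' using Fin.cases
      · exact absurd rfl hjj'
      · simpa using ne_smul_of_forall_ne_smul hQ₀0 (hQQ₀ _) c
      · simpa using hQQ₀ _ c
      · simpa using hQQ _ _ (fun h => hjj' (by rw [h])) c
    · rwa [inf_iInf_vanishingSubmodule_cons]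

end Points

section FatPointSpace

variable {K : Type*} [Field K] {N k : ℕ}

instance (d : ℕ) (P : Fin k → Fin N → K) (m : Fin k → ℕ) :
    FiniteDimensional K (fatPointSpace K N d P m) :=
  haveI : FiniteDimensional K (homogeneousSubmodule (Fin N) K d) :=
    Module.Finite.iff_fg.2 (homogeneousSubmodule_fg (σ := Fin N) (R := K) d)
  Submodule.finiteDimensional_of_le inf_le_left

variable [CharZero K] {a : Fin N → K} {P : Fin k → Fin N → K} {m m' : Fin k → ℕ}

theorem mem_fatPointSpace_of_linearForm_mul_mem (ha : a ≠ 0)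
    (hm' : ∀ i, (eval (P i) (linearForm a) = 0 → m' i = m i - 1) ∧
      (eval (P i) (linearForm a) ≠ 0 → m' i = m i))
    {e : ℕ} {G : MvPolynomial (Fin N) K} (h : linearForm a * G ∈ fatPointSpace K N (e + 1) P m) :
    G ∈ fatPointSpace K N e P m' := by
  simp only [fatPointSpace, Submodule.mem_inf, Submodule.mem_iInf, mem_homogeneousSubmodule] at h ⊢
  refine ⟨(isHomogeneous_linearForm a).of_mul_left (linearForm_ne_zero ha)
    (by rw [add_comm]; exact h.1), fun i => ?_⟩
  rcases eq_or_ne (eval (P i) (linearForm a)) 0 with hP | hP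
  · rw [(hm' i).1 hP]
    exact mem_vanishingSubmodule_pred_of_linearForm_mul_mem ha hP (h.2 i)
  · rw [(hm' i).2 hP]
    exact mem_vanishingSubmodule_of_linearForm_mul_mem hP (h.2 i)

theorem finrank_le_finrank_fatPointSpace_pred (ha : a ≠ 0)
    (hm' : ∀ i, (eval (P i) (linearForm a) = 0 → m' i = m i - 1) ∧
      (eval (P i) (linearForm a) ≠ 0 → m' i = m i))
    {d : ℕ} (hd : 0 < d) {W : Submodule K (MvPolynomial (Fin N) K)}
    (hW : W ≤ fatPointSpace K N d P m) (hdvd : ∀ F ∈ W, linearForm a ∣ F) :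
    finrank K W ≤ finrank K (fatPointSpace K N (d - 1) P m') := by
  have hWle : W ≤ (fatPointSpace K N (d - 1) P m').map (LinearMap.mulLeft K (linearForm a)) := by
    intro F hF
    obtain ⟨G, rfl⟩ := hdvd F hF
    refine ⟨G, mem_fatPointSpace_of_linearForm_mul_mem ha hm' ?_, rfl⟩
    rw [Nat.sub_add_cancel hd]
    exact hW hF
  exact (Submodule.finrank_mono hWle).trans (Submodule.finrank_map_le _ _)

end FatPointSpace

end FatPoint

theorem stmt8_general (K : Type*) [Field K] [CharZero K]
    (n : ℕ) (hn : 2 ≤ n)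
    (ℓ : MvPolynomial (Fin (n + 1)) K) (hℓ : ℓ ≠ 0) (hℓhom : ℓ.IsHomogeneous 1)
    {k : ℕ} (P : Fin k → (Fin (n + 1) → K))
    (m m' : Fin k → ℕ)
    (hm' : ∀ i, (MvPolynomial.eval (P i) ℓ = 0 → m' i = m i - 1) ∧
      (MvPolynomial.eval (P i) ℓ ≠ 0 → m' i = m i))
    (d z γ : ℕ) (hd : 0 < d)
    (hY : Module.finrank K (fatPointSpace K (n + 1) d P m) ≤ γ + z)
    (hRes : Module.finrank K (fatPointSpace K (n + 1) (d - 1) P m') ≤ γ) :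
    ∃ Q : Fin z → (Fin (n + 1) → K),
      (∀ j, Q j ≠ 0) ∧
      (∀ j, MvPolynomial.eval (Q j) ℓ = 0) ∧
      (∀ j j', j ≠ j' → ∀ c : K, Q j ≠ c • Q j') ∧
      (∀ j i, ∀ c : K, Q j ≠ c • P i) ∧
      Module.finrank K
        ↥(fatPointSpace K (n + 1) d P m ⊓ ⨅ j, vanishingSubmodule K (n + 1) 1 (Q j)) ≤ γ := by
  classical
  obtain ⟨a, rfl⟩ := hℓhom.exists_eq_linearForm
  have ha : a ≠ 0 := by
    rintro rfl
    simp [linearForm] at hℓ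
  obtain ⟨Q, hQℓ, hQS, hQQ, hrank⟩ := FatPoint.exists_points_finrank_inf_le (by omega) ha z
    (fatPointSpace K (n + 1) d P m)
    (fun W hW hdvd => (FatPoint.finrank_le_finrank_fatPointSpace_pred ha hm' hd hW hdvd).trans hRes)
    hY (insert 0 (Finset.univ.image P)) (Finset.mem_insert_self _ _)
  -- avoiding the "line" through `0` makes the points nonzero
  refine ⟨Q, fun j => by simpa using hQS j 0 (Finset.mem_insert_self _ _) 1, hQℓ, hQQ,
    fun j i => hQS j (P i) (by simp), hrank⟩

theorem stmt8 (K : Type*) [Field K] [IsAlgClosed K] [CharZero K]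
    (n : ℕ) (hn : 2 ≤ n)
    (ℓ : MvPolynomial (Fin (n + 1)) K) (hℓ : ℓ ≠ 0) (hℓhom : ℓ.IsHomogeneous 1)
    {k : ℕ} (P : Fin k → (Fin (n + 1) → K)) (hP : ProjDistinct P)
    (m m' : Fin k → ℕ)
    (hm' : ∀ i, (MvPolynomial.eval (P i) ℓ = 0 → m' i = m i - 1) ∧
      (MvPolynomial.eval (P i) ℓ ≠ 0 → m' i = m i))
    (d z γ : ℕ) (hd : 0 < d) (hz : 0 < z)
    (hY : Module.finrank K (fatPointSpace K (n + 1) d P m) ≤ γ + z)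
    (hRes : Module.finrank K (fatPointSpace K (n + 1) (d - 1) P m') ≤ γ) :
    ∃ Q : Fin z → (Fin (n + 1) → K),
      (∀ j, Q j ≠ 0) ∧
      (∀ j, MvPolynomial.eval (Q j) ℓ = 0) ∧
      (∀ j j', j ≠ j' → ∀ c : K, Q j ≠ c • Q j') ∧
      (∀ j i, ∀ c : K, Q j ≠ c • P i) ∧
      Module.finrank K
        ↥(fatPointSpace K (n + 1) d P m ⊓ ⨅ j, vanishingSubmodule K (n + 1) 1 (Q j)) ≤ γ :=
  stmt8_general K n hn ℓ hℓ hℓhom P m m' hm' d z γ hd hY hRes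
end

section
/- Let K be any field, let P_1, …, P_8, P_9 be any 9 points of P^3 over K. Then there exists a nonzero homogeneous polynomial of degree 8 in K[x0,x1,x2,x3] vanishing to order 4 at P_1, …, P_8 and to order 3 at P_9. In particular, since a general union of 8 4-points and 1 3-point of P^3 has total length 170 > 165 = C(11,3), it does not have good postulation in degree 8. -/
/-! A nonzero quadric `Q` passes through any 9 points of `ℙ³`, since quadrics in four variables
form a space of dimension `C(5, 2) = 10`. Every partial derivative of order `j` of `Q ^ 4` is
divisible by `Q ^ (4 - j)`, so `F = Q ^ 4` vanishes to order 4 at all nine points. -/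

open MvPolynomial

section

variable {R : Type*} [CommRing R]

theorem pow_dvd_pderiv_of_pow_succ_dvd {σ : Type*} {Q F : MvPolynomial σ R} {m : ℕ} (i : σ)
    (h : Q ^ (m + 1) ∣ F) : Q ^ m ∣ pderiv i F := by
  obtain ⟨G, rfl⟩ := h
  rw [pderiv_mul, pderiv_pow, Nat.add_sub_cancel]
  exact dvd_add (Dvd.intro (↑(m + 1) * pderiv i Q * G) (by ring))
    (Dvd.intro (Q * pderiv i G) (by ring))

theorem derivAlong_cons {n : ℕ} (i : Fin n) (l : List (Fin n)) (F : MvPolynomial (Fin n) R) :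
    derivAlong R n (i :: l) F = pderiv i (derivAlong R n l F) := by
  simp only [derivAlong, List.map_cons, List.prod_cons, Module.End.mul_apply]
  rfl

theorem pow_dvd_derivAlong_of_pow_add_length_dvd {n : ℕ} {Q F : MvPolynomial (Fin n) R}
    (l : List (Fin n)) {k : ℕ} (h : Q ^ (k + l.length) ∣ F) : Q ^ k ∣ derivAlong R n l F := by
  induction l generalizing k with
  | nil => simpa [derivAlong] using h
  | cons i t ih =>
    rw [derivAlong_cons]
    rw [List.length_cons, ← add_assoc, add_right_comm] at h
    exact pow_dvd_pderiv_of_pow_succ_dvd i (ih h)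

theorem pow_mem_vanishingSubmodule {n m N : ℕ} {Q : MvPolynomial (Fin n) R} {P : Fin n → R}
    (hQ : aeval P Q = 0) (hmN : m ≤ N) : Q ^ N ∈ vanishingSubmodule R n m P := by
  simp only [vanishingSubmodule, Submodule.mem_iInf]
  intro l (hl : l.length < m)
  have hQN : Q ^ (1 + l.length) ∣ Q ^ N := pow_dvd_pow Q (by omega)
  obtain ⟨G, hG⟩ : Q ∣ derivAlong R n l (Q ^ N) := by
    simpa using pow_dvd_derivAlong_of_pow_add_length_dvd l hQN
  rw [LinearMap.mem_ker, LinearMap.comp_apply, hG, AlgHom.toLinearMap_apply, map_mul, hQ,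
    zero_mul]

end

theorem MvPolynomial.finrank_homogeneousSubmodule {σ K : Type*} [Fintype σ] [Field K] (d : ℕ) :
    Module.finrank K (homogeneousSubmodule σ K d) = (Fintype.card σ + d - 1).choose d := by
  classical
  have hdeg : {e : σ →₀ ℕ | e.degree = d} =
      ((Finset.univ : Finset σ).finsuppAntidiag d : Set (σ →₀ ℕ)) := by
    ext e; simp [Finsupp.degree_eq_sum]
  rw [homogeneousSubmodule_eq_finsupp_supported, hdeg,
    (AddMonoidAlgebra.supportedEquivFinsupp _).finrank_eq, Module.finrank_finsupp_self]
  simp [Finset.card_finsuppAntidiag_nat_eq_choose]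

theorem MvPolynomial.exists_isHomogeneous_ne_zero_forall_aeval_eq_zero {ι σ K : Type*}
    [Fintype ι] [Fintype σ] [Field K] {d : ℕ} (P : ι → σ → K)
    (hcard : Fintype.card ι < (Fintype.card σ + d - 1).choose d) :
    ∃ Q : MvPolynomial σ K, Q ≠ 0 ∧ Q.IsHomogeneous d ∧ ∀ i, aeval (P i) Q = 0 := by
  let eval : homogeneousSubmodule σ K d →ₗ[K] (ι → K) :=
    LinearMap.pi (fun i ↦ (aeval (P i)).toLinearMap) ∘ₗ (homogeneousSubmodule σ K d).subtype
  have hrank : Module.finrank K (ι → K) < Module.finrank K (homogeneousSubmodule σ K d) := by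
    rwa [Module.finrank_fintype_fun_eq_card, finrank_homogeneousSubmodule]
  have : FiniteDimensional K (homogeneousSubmodule σ K d) :=
    Module.finite_of_finrank_pos (by omega)
  obtain ⟨⟨Q, hQd⟩, hQ, hQ0⟩ :=
    Submodule.exists_mem_ne_zero_of_ne_bot (LinearMap.ker_ne_bot_of_finrank_lt hrank)
  exact ⟨Q, by simpa using hQ0, hQd, fun i ↦ congrFun (LinearMap.mem_ker.mp hQ : eval _ = 0) i⟩

theorem stmt10_general (K : Type*) [Field K]
    (P : Fin 9 → (Fin 4 → K)) :
    (∃ F : MvPolynomial (Fin 4) K, F ≠ 0 ∧ F.IsHomogeneous 8 ∧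
      (∀ i : Fin 9, (i : ℕ) < 8 → F ∈ vanishingSubmodule K 4 4 (P i)) ∧
      F ∈ vanishingSubmodule K 4 3 (P 8)) ∧
    8 * Nat.choose 6 3 + Nat.choose 5 3 > Nat.choose 11 3 := by
  refine ⟨?_, by decide⟩
  obtain ⟨Q, hQ0, hQ, hPQ⟩ :=
    exists_isHomogeneous_ne_zero_forall_aeval_eq_zero (d := 2) P (by decide)
  exact ⟨Q ^ 4, pow_ne_zero 4 hQ0, hQ.pow 4, fun i _ ↦ pow_mem_vanishingSubmodule (hPQ i) le_rfl,
    pow_mem_vanishingSubmodule (hPQ 8) (by norm_num)⟩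

theorem stmt10 (K : Type*) [Field K]
    (P : Fin 9 → (Fin 4 → K)) (hP : ∀ i, P i ≠ 0) :
    (∃ F : MvPolynomial (Fin 4) K, F ≠ 0 ∧ F.IsHomogeneous 8 ∧
      (∀ i : Fin 9, (i : ℕ) < 8 → F ∈ vanishingSubmodule K 4 4 (P i)) ∧
      F ∈ vanishingSubmodule K 4 3 (P 8)) ∧
    8 * Nat.choose 6 3 + Nat.choose 5 3 > Nat.choose 11 3 :=
  stmt10_general K P
end
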